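/- arXiv:1702.08486 — 2 statements merged into one kernel-verified Lean document; each statement's English description precedes it below -/
import Mathlib

section
/- Cauchy–Schwarz inequality for upper Burkill integrals: for interval functions g₁, g₂ on R, (upper ∫_R g₁·g₂)² ≤ (upper ∫_R g₁²)·(upper ∫_R g₂²), assuming the right-hand side quantities are finite and the upper integral of g₁g₂ is nonnegative. -/
/-!
On each division the classical Cauchy–Schwarz inequality bounds the sum of `g₁ g₂` by
`√(∑ g₁² · ∑ g₂²)`. Along any Riemann succession the two sums of squares are eventually below
`B + ε` and `C + ε`, so every limsup of sums of `g₁ g₂`, hence the upper integral, is at most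
`√((B + ε)(C + ε))`. Letting `ε → 0` bounds the upper integral of `g₁ g₂` by `√(B C)`, and
`B, C ≥ 0` since sums of squares are nonnegative.
-/

open Filter Finset

/-- A division of the interval `[a, b]` into finitely many non-overlapping
subintervals, given by division points `P 0 = a < P 1 < ⋯ < P n = b`. -/
structure Division (a b : ℝ) where
  n : ℕ
  P : ℕ → ℝ
  npos : 0 < n
  mono : ∀ i < n, P i < P (i + 1)
  first : P 0 = a
  last : P n = b

/-- The Riemann sum of the interval function `g` over the division `D`. -/
def Division.sum {a b : ℝ} (D : Division a b) (g : ℝ → ℝ → ℝ) : ℝ :=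
  ∑ i ∈ Finset.range D.n, g (D.P i) (D.P (i + 1))

/-- `D.normLt e` means that the norm (mesh) of the division `D` is `< e`. -/
def Division.normLt {a b : ℝ} (D : Division a b) (e : ℝ) : Prop :=
  ∀ i < D.n, D.P (i + 1) - D.P i < e

/-- A Riemann succession: a sequence of divisions whose norms tend to `0`. -/
def IsRiemannSuccession {a b : ℝ} (D : ℕ → Division a b) : Prop :=
  ∀ e > 0, ∃ N, ∀ n ≥ N, (D n).normLt e

/-- The upper Burkill integral of `g` over `[a, b]` (with respect to the family
of all Riemann successions): the supremum over all Riemann successions of the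
limsup of the Riemann sums. -/
noncomputable def upperBurkill (g : ℝ → ℝ → ℝ) (a b : ℝ) : EReal :=
  sSup {L : EReal | ∃ D : ℕ → Division a b, IsRiemannSuccession D ∧
    L = Filter.limsup (fun n => (((D n).sum g : ℝ) : EReal)) Filter.atTop}

/-- The lower Burkill integral of `g` over `[a, b]`: the infimum over all
Riemann successions of the liminf of the Riemann sums. -/
noncomputable def lowerBurkill (g : ℝ → ℝ → ℝ) (a b : ℝ) : EReal :=
  sInf {L : EReal | ∃ D : ℕ → Division a b, IsRiemannSuccession D ∧
    L = Filter.liminf (fun n => (((D n).sum g : ℝ) : EReal)) Filter.atTop}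

open Topology

namespace Division

variable {a b : ℝ}

theorem sum_mul_sq_le_sum_sq_mul_sum_sq (D : Division a b) (g₁ g₂ : ℝ → ℝ → ℝ) :
    D.sum (fun x y => g₁ x y * g₂ x y) ^ 2 ≤
      D.sum (fun x y => g₁ x y ^ 2) * D.sum (fun x y => g₂ x y ^ 2) :=
  sum_mul_sq_le_sq_mul_sq _ _ _

theorem sum_nonneg (D : Division a b) {g : ℝ → ℝ → ℝ} (hg : ∀ x y, 0 ≤ g x y) :
    0 ≤ D.sum g :=
  Finset.sum_nonneg fun _ _ => hg _ _

end Division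

section UpperBurkill

variable {g : ℝ → ℝ → ℝ} {a b : ℝ}

theorem limsup_sum_le_upperBurkill {D : ℕ → Division a b} (hD : IsRiemannSuccession D) :
    limsup (fun n => (((D n).sum g : ℝ) : EReal)) atTop ≤ upperBurkill g a b :=
  le_sSup ⟨D, hD, rfl⟩

theorem eventually_sum_lt_of_upperBurkill_lt {D : ℕ → Division a b}
    (hD : IsRiemannSuccession D) {c : ℝ} (hc : upperBurkill g a b < c) :
    ∀ᶠ n in atTop, (D n).sum g < c := by
  filter_upwards [eventually_lt_of_limsup_lt ((limsup_sum_le_upperBurkill hD).trans_lt hc)]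
    with n hn
  exact mod_cast hn

theorem upperBurkill_nonneg (hg : ∀ x y, 0 ≤ g x y) (h : upperBurkill g a b ≠ ⊥) :
    0 ≤ upperBurkill g a b := by
  rw [upperBurkill, ne_eq, sSup_eq_bot] at h
  push Not at h
  obtain ⟨_, ⟨D, hD, rfl⟩, -⟩ := h
  refine le_trans ?_ (limsup_sum_le_upperBurkill hD)
  exact le_limsup_of_frequently_le
    (Frequently.of_forall fun n => mod_cast (D n).sum_nonneg hg) (by isBoundedDefault)

end UpperBurkill

section CauchySchwarz

variable {g₁ g₂ : ℝ → ℝ → ℝ} {a b : ℝ}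

theorem upperBurkill_mul_le_sqrt_of_lt {P Q : ℝ}
    (hP : upperBurkill (fun x y => g₁ x y ^ 2) a b < P)
    (hQ : upperBurkill (fun x y => g₂ x y ^ 2) a b < Q) :
    upperBurkill (fun x y => g₁ x y * g₂ x y) a b ≤ (√(P * Q) : ℝ) := by
  refine sSup_le ?_
  rintro _ ⟨D, hD, rfl⟩
  refine limsup_le_of_le (by isBoundedDefault) ?_
  filter_upwards [eventually_sum_lt_of_upperBurkill_lt hD hP,
    eventually_sum_lt_of_upperBurkill_lt hD hQ] with n hPn hQn
  have hsq₁ := (D n).sum_nonneg (g := fun x y => g₁ x y ^ 2) fun _ _ => sq_nonneg _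
  have hsq₂ := (D n).sum_nonneg (g := fun x y => g₂ x y ^ 2) fun _ _ => sq_nonneg _
  have hsq : (D n).sum _ ^ 2 ≤ P * Q :=
    ((D n).sum_mul_sq_le_sum_sq_mul_sum_sq g₁ g₂).trans
      (mul_le_mul hPn.le hQn.le hsq₂ (hsq₁.trans hPn.le))
  exact mod_cast (le_abs_self _).trans (Real.abs_le_sqrt hsq)

theorem upperBurkill_mul_le_sqrt {P Q : ℝ}
    (hP : upperBurkill (fun x y => g₁ x y ^ 2) a b ≤ P)
    (hQ : upperBurkill (fun x y => g₂ x y ^ 2) a b ≤ Q) :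
    upperBurkill (fun x y => g₁ x y * g₂ x y) a b ≤ (√(P * Q) : ℝ) := by
  have hlim : Tendsto (fun ε : ℝ => ((√((P + ε) * (Q + ε)) : ℝ) : EReal)) (𝓝[>] 0)
      (𝓝 (√(P * Q) : ℝ)) := by
    refine (continuous_coe_real_ereal.tendsto _).comp (tendsto_nhdsWithin_of_tendsto_nhds ?_)
    simpa using ((continuous_const_add P).mul (continuous_const_add Q)).sqrt.tendsto 0
  refine ge_of_tendsto hlim (eventually_nhdsWithin_of_forall fun ε (hε : 0 < ε) => ?_)
  exact upperBurkill_mul_le_sqrt_of_lt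
    (hP.trans_lt (mod_cast lt_add_of_pos_right P hε))
    (hQ.trans_lt (mod_cast lt_add_of_pos_right Q hε))

end CauchySchwarz

theorem upperBurkill_cauchy_schwarz_general (g₁ g₂ : ℝ → ℝ → ℝ) (a b : ℝ)
    (B C : ℝ)
    (hB : upperBurkill (fun x y => g₁ x y ^ 2) a b = (B : EReal))
    (hC : upperBurkill (fun x y => g₂ x y ^ 2) a b = (C : EReal))
    (h0 : 0 ≤ upperBurkill (fun x y => g₁ x y * g₂ x y) a b) :
    upperBurkill (fun x y => g₁ x y * g₂ x y) a b *
      upperBurkill (fun x y => g₁ x y * g₂ x y) a b ≤ ((B * C : ℝ) : EReal) := by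
  have hB₀ : 0 ≤ B := EReal.coe_nonneg.mp <|
    hB ▸ upperBurkill_nonneg (fun x y => sq_nonneg (g₁ x y)) (hB ▸ EReal.coe_ne_bot B)
  have hC₀ : 0 ≤ C := EReal.coe_nonneg.mp <|
    hC ▸ upperBurkill_nonneg (fun x y => sq_nonneg (g₂ x y)) (hC ▸ EReal.coe_ne_bot C)
  have hle := upperBurkill_mul_le_sqrt hB.le hC.le
  generalize upperBurkill (fun x y => g₁ x y * g₂ x y) a b = U at h0 hle ⊢
  induction U using EReal.rec with
  | bot => simp at h0
  | top => simp at hle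
  | coe u =>
    have hu₀ : 0 ≤ u := mod_cast h0
    have hu : u ≤ √(B * C) := mod_cast hle
    have : u * u ≤ B * C :=
      (mul_self_le_mul_self hu₀ hu).trans_eq (Real.mul_self_sqrt (mul_nonneg hB₀ hC₀))
    exact mod_cast this

/-- (2.18a): Cauchy–Schwarz inequality for upper Burkill integrals:
`(upper ∫ g₁·g₂)² ≤ (upper ∫ g₁²) · (upper ∫ g₂²)`, assuming the two quantities on the
right are finite and the upper integral of `g₁·g₂` is nonnegative. -/
theorem upperBurkill_cauchy_schwarz (g₁ g₂ : ℝ → ℝ → ℝ) (a b : ℝ) (hab : a < b)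
    (B C : ℝ)
    (hB : upperBurkill (fun x y => g₁ x y ^ 2) a b = (B : EReal))
    (hC : upperBurkill (fun x y => g₂ x y ^ 2) a b = (C : EReal))
    (h0 : 0 ≤ upperBurkill (fun x y => g₁ x y * g₂ x y) a b) :
    upperBurkill (fun x y => g₁ x y * g₂ x y) a b *
      upperBurkill (fun x y => g₁ x y * g₂ x y) a b ≤ ((B * C : ℝ) : EReal) :=
  upperBurkill_cauchy_schwarz_general g₁ g₂ a b B C hB hC h0
end

section
/- Saks's additivity formula for upper Burkill integrals is false: there exists an interval function g on [0,2] whose upper Burkill integral over (0,1) equals 1, over (1,2) equals 0, over (0,2) equals 1, while the additivity-defect quantity A(1) = max(limsup_{x,z→1}(g([x,z]) − g([x,1]) − g([1,z])), 0) equals 1; hence the claimed identity upper∫_{(0,2)} g = upper∫_{(0,1)} g + upper∫_{(1,2)} g + A(1) fails. -/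
open Filter Finset

/-- The additivity-defect quantity `A(y)` of Saks at the point `y`:
`max(limsup_{x → y⁻, z → y⁺} (g([x,z]) − g([x,y]) − g([y,z])), 0)`. -/
noncomputable def saksA (g : ℝ → ℝ → ℝ) (y : ℝ) : ℝ :=
  max (Filter.limsup (fun p : ℝ × ℝ => g p.1 p.2 - g p.1 y - g y p.2)
    ((nhdsWithin y (Set.Iio y)) ×ˢ (nhdsWithin y (Set.Ioi y)))) 0

open Topology

/-! Let `u` be the indicator of the complement of the corners `1 - 2⁻ⁿ`. Then `g x y ≤ u y - u x`
for all `x, y`, so every Riemann sum of `g` over `[0, c]`, `c ≥ 1`, is at most `u c - u 0 = 1`,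
and over `[1, 2]` it vanishes. Equality holds on grids of odd mesh `1 / K`, whose
only corner is `0`. The defect at `1` is produced by the intervals `[1 - 2⁻ⁿ, 1 + 2⁻ⁿ]`, on which
`g = 1`, while `g x 1 = 0` and `g 1 z = 0` for `z ≥ 1`. -/

namespace Division

variable {a b : ℝ} (D : Division a b) (g : ℝ → ℝ → ℝ)

theorem strictMonoOn_P : StrictMonoOn D.P (Set.Iic D.n) :=
  strictMonoOn_Iic_of_lt_succ fun i hi => by simpa using D.mono i hi

theorem le_P {i : ℕ} (hi : i ≤ D.n) : a ≤ D.P i := by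
  simpa only [D.first] using
    D.strictMonoOn_P.monotoneOn (Set.mem_Iic.2 (Nat.zero_le _)) hi (Nat.zero_le i)

theorem sum_eq_sub_of_eq_sub (φ : ℝ → ℝ)
    (h : ∀ i < D.n, g (D.P i) (D.P (i + 1)) = φ (D.P (i + 1)) - φ (D.P i)) :
    D.sum g = φ b - φ a := by
  rw [Division.sum, Finset.sum_congr rfl fun i hi => h i (Finset.mem_range.1 hi),
    Finset.sum_range_sub (fun i => φ (D.P i)), D.first, D.last]

theorem sum_le_sub_of_le_sub (φ : ℝ → ℝ) (h : ∀ x y, g x y ≤ φ y - φ x) :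
    D.sum g ≤ φ b - φ a := by
  rw [← D.sum_eq_sub_of_eq_sub (fun x y => φ y - φ x) φ fun _ _ => rfl]
  exact Finset.sum_le_sum fun i _ => h _ _

noncomputable def uniform (hab : a < b) (N : ℕ) (hN : 0 < N) : Division a b where
  n := N
  P i := a + i * ((b - a) / N)
  npos := hN
  mono i _ := by push_cast; nlinarith [div_pos (sub_pos.2 hab) (Nat.cast_pos.2 hN)]
  first := by simp
  last := by field_simp; ring

theorem uniform_P (hab : a < b) (N : ℕ) (hN : 0 < N) (i : ℕ) :
    (uniform hab N hN).P i = a + i * ((b - a) / N) := rfl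

end Division

theorem isRiemannSuccession_uniform {a b : ℝ} (hab : a < b) (N : ℕ → ℕ) (hN : ∀ m, 0 < N m)
    (hlim : Tendsto N atTop atTop) :
    IsRiemannSuccession fun m => Division.uniform hab (N m) (hN m) := by
  intro e he
  have hmesh : Tendsto (fun m => (b - a) / N m) atTop (𝓝 0) :=
    tendsto_const_nhds.div_atTop (tendsto_natCast_atTop_atTop.comp hlim)
  obtain ⟨M, hM⟩ := eventually_atTop.1 (hmesh.eventually (gt_mem_nhds he))
  refine ⟨M, fun m hm i _ => ?_⟩
  simp only [Division.uniform_P]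
  push_cast
  linarith [hM m hm]

section UpperBurkill

variable {g : ℝ → ℝ → ℝ} {a b c : ℝ}

theorem upperBurkill_le_of_forall_sum_le (h : ∀ D : Division a b, D.sum g ≤ c) :
    upperBurkill g a b ≤ c := by
  refine sSup_le ?_
  rintro L ⟨D, -, rfl⟩
  exact limsup_le_of_le (by isBoundedDefault) (.of_forall fun n => EReal.coe_le_coe_iff.2 (h (D n)))

theorem le_upperBurkill_of_sum_eq {D : ℕ → Division a b} (hD : IsRiemannSuccession D)
    (h : ∀ n, (D n).sum g = c) : (c : EReal) ≤ upperBurkill g a b :=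
  le_sSup ⟨D, hD, by simp only [h, limsup_const]⟩

end UpperBurkill

def corners : Set ℝ := Set.range fun n : ℕ => 1 - 2⁻¹ ^ n

noncomputable def notCorner : ℝ → ℝ := cornersᶜ.indicator 1

open Classical in
/-- A discontinuous variant of the paper's example: `notCorner` replaces the piecewise linear `f`,
and `x ∈ corners ∧ x + y = 2` singles out the intervals `[1 - 2⁻ⁿ, 1 + 2⁻ⁿ]`. -/
noncomputable def saksCounterexample (x y : ℝ) : ℝ :=
  if y < 1 then notCorner y - notCorner x
  else if x ∈ corners ∧ x + y = 2 then 1 else 0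

theorem lt_one_of_mem_corners {x : ℝ} (hx : x ∈ corners) : x < 1 := by
  obtain ⟨n, rfl⟩ := hx
  linarith [pow_pos (by norm_num : (0 : ℝ) < 2⁻¹) n]

theorem zero_mem_corners : (0 : ℝ) ∈ corners := ⟨0, by norm_num⟩

theorem notCorner_of_mem {x : ℝ} (hx : x ∈ corners) : notCorner x = 0 :=
  Set.indicator_of_notMem (not_not.2 hx) _

theorem notCorner_of_notMem {x : ℝ} (hx : x ∉ corners) : notCorner x = 1 :=
  Set.indicator_of_mem hx _

theorem notCorner_of_one_le {x : ℝ} (hx : 1 ≤ x) : notCorner x = 1 :=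
  notCorner_of_notMem fun h => (lt_one_of_mem_corners h).not_ge hx

theorem notCorner_le_one (x : ℝ) : notCorner x ≤ 1 := by
  unfold notCorner Set.indicator; split_ifs <;> norm_num

theorem notCorner_nonneg (x : ℝ) : 0 ≤ notCorner x := by
  unfold notCorner Set.indicator; split_ifs <;> norm_num

theorem div_odd_notMem_corners {K i : ℕ} (hK : Odd K) (hi : i ≠ 0) : (i / K : ℝ) ∉ corners := by
  rintro ⟨n, hn⟩
  have hK0 : (K : ℝ) ≠ 0 := Nat.cast_ne_zero.2 (Nat.pos_of_ne_zero (by rintro rfl; simp at hK)).ne'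
  have hreal : (2 : ℝ) ^ n * (K - i) = K := by
    simp only [inv_pow] at hn
    field_simp at hn
    linear_combination hn
  have hint : (2 : ℤ) ^ n * (K - i) = K := by exact_mod_cast hreal
  have hodd : Odd ((2 : ℤ) ^ n) := (Int.odd_mul.1 (hint ▸ (Int.odd_coe_nat K).2 hK)).1
  obtain rfl : n = 0 := (Int.odd_pow.1 hodd).resolve_left (by decide)
  omega

theorem saksCounterexample_le_sub (x y : ℝ) :
    saksCounterexample x y ≤ notCorner y - notCorner x := by
  unfold saksCounterexample
  split_ifs with hy hcorner
  · rfl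
  · rw [notCorner_of_one_le (not_lt.1 hy), notCorner_of_mem hcorner.1, sub_zero]
  · linarith [notCorner_of_one_le (not_lt.1 hy), notCorner_le_one x]

theorem saksCounterexample_eq_sub {x y : ℝ} (h : y < 1 ∨ x ∉ corners) :
    saksCounterexample x y = notCorner y - notCorner x := by
  unfold saksCounterexample
  split_ifs with hy hcorner
  · rfl
  · exact absurd hcorner.1 (h.resolve_left hy)
  · rw [notCorner_of_one_le (not_lt.1 hy), notCorner_of_notMem (h.resolve_left hy), sub_self]

theorem saksCounterexample_le_one (x y : ℝ) : saksCounterexample x y ≤ 1 := by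
  linarith [saksCounterexample_le_sub x y, notCorner_le_one y, notCorner_nonneg x]

theorem saksCounterexample_one_right (x : ℝ) : saksCounterexample x 1 = 0 := by
  unfold saksCounterexample
  rw [if_neg (lt_irrefl 1), if_neg]
  rintro ⟨hx, hsum⟩
  linarith [lt_one_of_mem_corners hx]

theorem saksCounterexample_one_left {y : ℝ} (hy : 1 ≤ y) : saksCounterexample 1 y = 0 := by
  rw [saksCounterexample_eq_sub (Or.inr fun h => (lt_one_of_mem_corners h).false),
    notCorner_of_one_le hy, notCorner_of_one_le le_rfl, sub_self]

theorem saksCounterexample_corner (n : ℕ) :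
    saksCounterexample (1 - 2⁻¹ ^ n) (1 + 2⁻¹ ^ n) = 1 := by
  unfold saksCounterexample
  rw [if_neg (by linarith [pow_pos (by norm_num : (0 : ℝ) < 2⁻¹) n]), if_pos ⟨⟨n, rfl⟩, by ring⟩]

theorem sum_saksCounterexample_le_one {c : ℝ} (hc : 1 ≤ c) (D : Division 0 c) :
    D.sum saksCounterexample ≤ 1 := by
  have := D.sum_le_sub_of_le_sub _ notCorner saksCounterexample_le_sub
  rwa [notCorner_of_one_le hc, notCorner_of_mem zero_mem_corners, sub_zero] at this

theorem sum_saksCounterexample_one_two (D : Division 1 2) : D.sum saksCounterexample = 0 := by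
  rw [D.sum_eq_sub_of_eq_sub _ notCorner fun i hi => saksCounterexample_eq_sub
      (Or.inr fun h => (lt_one_of_mem_corners h).not_ge (D.le_P hi.le)),
    notCorner_of_one_le one_le_two, notCorner_of_one_le le_rfl, sub_self]

theorem sum_saksCounterexample_odd_grid {c : ℝ} (hc : 1 ≤ c) (D : Division 0 c) {K : ℕ}
    (hK : Odd K) (hK1 : 1 < K) (hP : ∀ i, D.P i = i / K) : D.sum saksCounterexample = 1 := by
  rw [D.sum_eq_sub_of_eq_sub _ notCorner fun i _ => saksCounterexample_eq_sub ?_,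
    notCorner_of_one_le hc, notCorner_of_mem zero_mem_corners, sub_zero]
  rcases Nat.eq_zero_or_pos i with rfl | hi
  · left
    rw [hP, Nat.cast_one, div_lt_one (by positivity)]
    exact_mod_cast hK1
  · exact Or.inr (hP i ▸ div_odd_notMem_corners hK hi.ne')

theorem saksA_saksCounterexample : saksA saksCounterexample 1 = 1 := by
  set F := 𝓝[<] (1 : ℝ) ×ˢ 𝓝[>] (1 : ℝ)
  set h : ℝ × ℝ → ℝ := fun p =>
    saksCounterexample p.1 p.2 - saksCounterexample p.1 1 - saksCounterexample 1 p.2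
  have hle : ∀ᶠ p in F, h p ≤ 1 := by
    filter_upwards [prod_mem_prod univ_mem self_mem_nhdsWithin] with p hp
    simp only [h, saksCounterexample_one_right, saksCounterexample_one_left hp.2.le]
    linarith [saksCounterexample_le_one p.1 p.2]
  have hpos (n : ℕ) : (0 : ℝ) < 2⁻¹ ^ n := pow_pos (by norm_num) n
  have hpow : Tendsto (fun n : ℕ => (2⁻¹ : ℝ) ^ n) atTop (𝓝 0) :=
    tendsto_pow_atTop_nhds_zero_of_lt_one (by norm_num) (by norm_num)
  have hcorners : Tendsto (fun n : ℕ => (1 - (2⁻¹ : ℝ) ^ n, 1 + (2⁻¹ : ℝ) ^ n)) atTop F :=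
    .prodMk (tendsto_nhdsWithin_iff.2 ⟨by simpa using tendsto_const_nhds.sub hpow,
        .of_forall fun n => sub_lt_self 1 (hpos n)⟩)
      (tendsto_nhdsWithin_iff.2 ⟨by simpa using tendsto_const_nhds.add hpow,
        .of_forall fun n => lt_add_of_pos_right 1 (hpos n)⟩)
  have hge : ∃ᶠ p in F, 1 ≤ h p := hcorners.frequently (.of_forall fun n => by
    dsimp only [h]
    rw [saksCounterexample_corner, saksCounterexample_one_right,
      saksCounterexample_one_left (lt_add_of_pos_right 1 (hpos n)).le, sub_zero, sub_zero])
  have hlimsup : limsup h F = 1 :=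
    le_antisymm (limsup_le_of_le (.of_frequently_ge hge) hle)
      (le_limsup_of_frequently_le hge ⟨1, by rwa [eventually_map]⟩)
  rw [saksA, hlimsup]
  exact max_eq_left zero_le_one

theorem upperBurkill_saksCounterexample_zero_natCast {c : ℕ} (hc : 1 ≤ c) :
    upperBurkill saksCounterexample 0 c = 1 := by
  have hc' : (1 : ℝ) ≤ c := by exact_mod_cast hc
  have hK (m : ℕ) : 0 < c * (2 * m + 3) := by positivity
  refine le_antisymm ?_ ?_
  · exact_mod_cast upperBurkill_le_of_forall_sum_le (sum_saksCounterexample_le_one hc')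
  · have hlim : Tendsto (fun m => c * (2 * m + 3)) atTop atTop :=
      tendsto_atTop_atTop.2 fun b => ⟨b, fun m hm => by nlinarith⟩
    have := le_upperBurkill_of_sum_eq (isRiemannSuccession_uniform (by linarith) _ hK hlim)
      fun m => sum_saksCounterexample_odd_grid hc' _ (K := 2 * m + 3) ⟨m + 1, by ring⟩ (by omega)
        fun i => by rw [Division.uniform_P]; push_cast; field_simp; ring
    exact_mod_cast this

theorem upperBurkill_saksCounterexample_one_two : upperBurkill saksCounterexample 1 2 = 0 := by
  refine le_antisymm ?_ ?_
  · exact_mod_cast upperBurkill_le_of_forall_sum_le fun D => (sum_saksCounterexample_one_two D).le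
  · exact_mod_cast le_upperBurkill_of_sum_eq (isRiemannSuccession_uniform one_lt_two (· + 1)
      (fun _ => Nat.succ_pos _) (tendsto_add_atTop_nat 1)) fun m => sum_saksCounterexample_one_two _

/-- Saks's additivity formula for upper Burkill integrals is false: there is an interval
function `g` on `[0, 2]` whose upper Burkill integral over `(0,1)` equals `1`, over
`(1,2)` equals `0`, over `(0,2)` equals `1`, while `A(1) = 1`; hence
`upper ∫_{(0,2)} g = upper ∫_{(0,1)} g + upper ∫_{(1,2)} g + A(1)` fails. -/
theorem saks_additivity_formula_false :
    ∃ g : ℝ → ℝ → ℝ,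
      upperBurkill g 0 1 = (1 : EReal) ∧
      upperBurkill g 1 2 = (0 : EReal) ∧
      upperBurkill g 0 2 = (1 : EReal) ∧
      saksA g 1 = 1 ∧
      upperBurkill g 0 2 ≠
        upperBurkill g 0 1 + upperBurkill g 1 2 + ((saksA g 1 : ℝ) : EReal) := by
  have h01 : upperBurkill saksCounterexample 0 1 = 1 := by
    simpa using upperBurkill_saksCounterexample_zero_natCast le_rfl
  have h02 : upperBurkill saksCounterexample 0 2 = 1 := by
    simpa using upperBurkill_saksCounterexample_zero_natCast one_le_two
  refine ⟨saksCounterexample, h01, upperBurkill_saksCounterexample_one_two, h02,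
    saksA_saksCounterexample, ?_⟩
  rw [h01, h02, upperBurkill_saksCounterexample_one_two, saksA_saksCounterexample]
  norm_num
end
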